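/- arXiv:1901.09907 — 3 statements merged into one kernel-verified Lean document; each statement's English description precedes it below -/
import Mathlib

section
/- If f : [a,b] ⊆ (0,∞) → ℝ is symmetrized p-convex on [a,b] (p ≠ 0), then for any x ∈ [a,b]: f(((a^p + b^p)/2)^(1/p)) ≤ P_{(f;p)}(x) ≤ (f(a) + f(b))/2. -/
noncomputable section
open Real Set MeasureTheory intervalIntegral

/-- `f` is p-convex on `[a,b]`. -/
def PConvexOn (p a b : ℝ) (f : ℝ → ℝ) : Prop :=
  ∀ x ∈ Set.Icc a b, ∀ y ∈ Set.Icc a b, ∀ t ∈ Set.Icc (0:ℝ) 1,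
    f ((t * x ^ p + (1 - t) * y ^ p) ^ (1/p)) ≤ t * f x + (1 - t) * f y

/-- The p-symmetrical transform of `f` on `[a,b]`. -/
def PSym (p a b : ℝ) (f : ℝ → ℝ) : ℝ → ℝ :=
  fun x => (f x + f ((a ^ p + b ^ p - x ^ p) ^ (1/p))) / 2

lemma roundtrip₁ (p : ℝ) (hp : p ≠ 0) {c : ℝ} (hc : 0 < c) : (c ^ (1/p)) ^ p = c := by
  rw [← Real.rpow_mul hc.le, one_div, inv_mul_cancel₀ hp, Real.rpow_one]

lemma roundtrip₂ (p : ℝ) (hp : p ≠ 0) {c : ℝ} (hc : 0 < c) : (c ^ p) ^ (1/p) = c := by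
  rw [← Real.rpow_mul hc.le, one_div, mul_inv_cancel₀ hp, Real.rpow_one]

lemma rpow_mem (p a b : ℝ) (hp : p ≠ 0) (ha : 0 < a) (hb : 0 < b)
    {x : ℝ} (hx : x ∈ Set.Icc a b) :
    min (a ^ p) (b ^ p) ≤ x ^ p ∧ x ^ p ≤ max (a ^ p) (b ^ p) := by
  have hx0 : 0 < x := lt_of_lt_of_le ha hx.1
  rcases hp.lt_or_gt with hneg | hpos
  · exact ⟨le_trans (min_le_right _ _) (Real.rpow_le_rpow_of_nonpos hx0 hx.2 hneg.le),
      le_trans (Real.rpow_le_rpow_of_nonpos ha hx.1 hneg.le) (le_max_left _ _)⟩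
  · exact ⟨le_trans (min_le_left _ _) (Real.rpow_le_rpow ha.le hx.1 hpos.le),
      le_trans (Real.rpow_le_rpow hx0.le hx.2 hpos.le) (le_max_right _ _)⟩

lemma mem_of_rpow (p a b : ℝ) (hp : p ≠ 0) (ha : 0 < a) (hb : 0 < b) (hab : a ≤ b)
    {c : ℝ} (h1 : min (a ^ p) (b ^ p) ≤ c) (h2 : c ≤ max (a ^ p) (b ^ p)) :
    c ^ (1/p) ∈ Set.Icc a b := by
  have hap : 0 < a ^ p := Real.rpow_pos_of_pos ha p
  have hbp : 0 < b ^ p := Real.rpow_pos_of_pos hb p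
  have hc : 0 < c := lt_of_lt_of_le (lt_min hap hbp) h1
  rcases hp.lt_or_gt with hneg | hpos
  · have hba : b ^ p ≤ a ^ p := Real.rpow_le_rpow_of_nonpos ha hab hneg.le
    have h1' : b ^ p ≤ c := (min_eq_right hba) ▸ h1
    have h2' : c ≤ a ^ p := h2.trans_eq (max_eq_left hba)
    have h1p : 1 / p ≤ 0 := by
      rw [one_div]; exact (inv_nonpos).mpr hneg.le
    constructor
    · calc a = (a ^ p) ^ (1/p) := (roundtrip₂ p hp ha).symm
        _ ≤ c ^ (1/p) := Real.rpow_le_rpow_of_nonpos hc h2' h1p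
    · calc c ^ (1/p) ≤ (b ^ p) ^ (1/p) := Real.rpow_le_rpow_of_nonpos hbp h1' h1p
        _ = b := roundtrip₂ p hp hb
  · have hba : a ^ p ≤ b ^ p := Real.rpow_le_rpow ha.le hab hpos.le
    have h1' : a ^ p ≤ c := (min_eq_left hba) ▸ h1
    have h2' : c ≤ b ^ p := h2.trans_eq (max_eq_right hba)
    have h1p : 0 ≤ 1 / p := by positivity
    constructor
    · calc a = (a ^ p) ^ (1/p) := (roundtrip₂ p hp ha).symm
        _ ≤ c ^ (1/p) := Real.rpow_le_rpow hap.le h1' h1p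
    · calc c ^ (1/p) ≤ (b ^ p) ^ (1/p) := Real.rpow_le_rpow hc.le h2' h1p
        _ = b := roundtrip₂ p hp hb

theorem psym_bounds (p a b : ℝ) (hp : p ≠ 0) (ha : 0 < a) (hab : a < b)
    (f : ℝ → ℝ) (hf : PConvexOn p a b (PSym p a b f)) :
    ∀ x ∈ Set.Icc a b,
      f (((a ^ p + b ^ p) / 2) ^ (1/p)) ≤ PSym p a b f x ∧
      PSym p a b f x ≤ (f a + f b) / 2 := by
  have hb : 0 < b := ha.trans hab
  have hap : 0 < a ^ p := Real.rpow_pos_of_pos ha p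
  have hbp : 0 < b ^ p := Real.rpow_pos_of_pos hb p
  have hminmax : min (a ^ p) (b ^ p) + max (a ^ p) (b ^ p) = a ^ p + b ^ p :=
    min_add_max _ _
  intro x hx
  have hx0 : 0 < x := lt_of_lt_of_le ha hx.1
  obtain ⟨hxl, hxu⟩ := rpow_mem p a b hp ha hb hx
  -- the reflected point
  set c : ℝ := a ^ p + b ^ p - x ^ p with hc_def
  have hc1 : min (a ^ p) (b ^ p) ≤ c := by simp only [hc_def]; linarith
  have hc2 : c ≤ max (a ^ p) (b ^ p) := by simp only [hc_def]; linarith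
  have hc0 : 0 < c := lt_of_lt_of_le (lt_min hap hbp) hc1
  set y : ℝ := c ^ (1/p) with hy_def
  have hy : y ∈ Set.Icc a b := mem_of_rpow p a b hp ha hb hab.le hc1 hc2
  have hyp : y ^ p = c := roundtrip₁ p hp hc0
  have hxrt : (x ^ p) ^ (1/p) = x := roundtrip₂ p hp hx0
  have hsym : PSym p a b f y = PSym p a b f x := by
    simp only [PSym, hyp, hc_def]
    have : a ^ p + b ^ p - (a ^ p + b ^ p - x ^ p) = x ^ p := by ring
    rw [this, hxrt]
    ring
  -- midpoint
  set m : ℝ := ((a ^ p + b ^ p) / 2) ^ (1/p) with hm_def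
  have hmid0 : (0:ℝ) < (a ^ p + b ^ p) / 2 := by linarith
  have hmp : m ^ p = (a ^ p + b ^ p) / 2 := roundtrip₁ p hp hmid0
  have hPm : PSym p a b f m = f m := by
    simp only [PSym, hmp]
    have : a ^ p + b ^ p - (a ^ p + b ^ p) / 2 = (a ^ p + b ^ p) / 2 := by ring
    rw [this, ← hm_def]
    ring
  constructor
  · -- lower bound
    have h := hf x hx y hy (1/2) (by norm_num)
    have harg : (1/2) * x ^ p + (1 - 1/2) * y ^ p = (a ^ p + b ^ p) / 2 := by
      rw [hyp, hc_def]; ring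
    rw [harg, ← hm_def, hPm, hsym] at h
    calc f m ≤ 1/2 * PSym p a b f x + (1 - 1/2) * PSym p a b f x := h
      _ = PSym p a b f x := by ring
  · -- upper bound
    have hne : a ^ p ≠ b ^ p := by
      rcases hp.lt_or_gt with hneg | hpos
      · exact (Real.rpow_lt_rpow_of_neg ha hab hneg).ne'
      · exact (Real.rpow_lt_rpow ha.le hab hpos).ne
    set t : ℝ := (b ^ p - x ^ p) / (b ^ p - a ^ p) with ht_def
    have ht : t ∈ Set.Icc (0:ℝ) 1 := by
      rcases hp.lt_or_gt with hneg | hpos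
      · have hba : b ^ p < a ^ p := Real.rpow_lt_rpow_of_neg ha hab hneg
        have h1 : b ^ p ≤ x ^ p := (min_eq_right hba.le) ▸ hxl
        have h2 : x ^ p ≤ a ^ p := hxu.trans_eq (max_eq_left hba.le)
        have ht' : t = (x ^ p - b ^ p) / (a ^ p - b ^ p) := by
          rw [ht_def, div_eq_div_iff (by linarith) (by linarith)]; ring
        rw [ht']
        constructor
        · exact div_nonneg (by linarith) (by linarith)
        · rw [div_le_one (by linarith)]; linarith
      · have hba : a ^ p < b ^ p := Real.rpow_lt_rpow ha.le hab hpos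
        have h1 : a ^ p ≤ x ^ p := (min_eq_left hba.le) ▸ hxl
        have h2 : x ^ p ≤ b ^ p := hxu.trans_eq (max_eq_right hba.le)
        constructor
        · exact div_nonneg (by linarith) (by linarith)
        · rw [div_le_one (by linarith)]; linarith
    have h := hf a ⟨le_refl a, hab.le⟩ b ⟨hab.le, le_refl b⟩ t ht
    have hd : b ^ p - a ^ p ≠ 0 := sub_ne_zero.mpr (Ne.symm hne)
    have hcan : t * (b ^ p - a ^ p) = b ^ p - x ^ p := div_mul_cancel₀ _ hd
    have harg : t * a ^ p + (1 - t) * b ^ p = x ^ p := by linear_combination -hcan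
    rw [harg, hxrt] at h
    have hPa : PSym p a b f a = (f a + f b) / 2 := by
      simp only [PSym]
      have : a ^ p + b ^ p - a ^ p = b ^ p := by ring
      rw [this, roundtrip₂ p hp hb]
    have hPb : PSym p a b f b = (f a + f b) / 2 := by
      simp only [PSym]
      have : a ^ p + b ^ p - b ^ p = a ^ p := by ring
      rw [this, roundtrip₂ p hp ha]
      ring
    rw [hPa, hPb] at h
    calc PSym p a b f x ≤ t * ((f a + f b) / 2) + (1 - t) * ((f a + f b) / 2) := h
      _ = (f a + f b) / 2 := by ring
end
end

section
/- If f : [a,b] ⊆ (0,∞) → ℝ is symmetrized p-convex on [a,b] (p ≠ 0) and w : [a,b] → [0,∞) is integrable, then f(((a^p + b^p)/2)^(1/p)) · ∫_a^b w(x)·x^(p-1) dx ≤ ∫_a^b w(x)·P_{(f;p)}(x)·x^(p-1) dx ≤ ((f(a) + f(b))/2) · ∫_a^b w(x)·x^(p-1) dx. -/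
noncomputable section
open Real Set MeasureTheory intervalIntegral

lemma pow_mem_bounds {p a b x : ℝ} (hp : p ≠ 0) (ha : 0 < a)
    (hx : x ∈ Set.Icc a b) :
    min (a ^ p) (b ^ p) ≤ x ^ p ∧ x ^ p ≤ max (a ^ p) (b ^ p) := by
  obtain ⟨h1, h2⟩ := hx
  have hxpos : 0 < x := lt_of_lt_of_le ha h1
  rcases lt_or_gt_of_ne hp with hneg | hpos
  · exact ⟨le_trans (min_le_right _ _) (Real.rpow_le_rpow_of_nonpos hxpos h2 hneg.le),
      le_trans (Real.rpow_le_rpow_of_nonpos ha h1 hneg.le) (le_max_left _ _)⟩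
  · exact ⟨le_trans (min_le_left _ _) (Real.rpow_le_rpow ha.le h1 hpos.le),
      le_trans (Real.rpow_le_rpow hxpos.le h2 hpos.le) (le_max_right _ _)⟩

lemma rpow_inv_mem_Icc {p a b c : ℝ} (hp : p ≠ 0) (ha : 0 < a) (hab : a ≤ b)
    (h1 : min (a ^ p) (b ^ p) ≤ c) (h2 : c ≤ max (a ^ p) (b ^ p)) :
    c ^ (1/p) ∈ Set.Icc a b := by
  have hb : 0 < b := lt_of_lt_of_le ha hab
  have hcpos : 0 < c :=
    lt_of_lt_of_le (lt_min (Real.rpow_pos_of_pos ha p) (Real.rpow_pos_of_pos hb p)) h1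
  rw [one_div]
  rcases lt_or_gt_of_ne hp with hneg | hpos
  · have hord : b ^ p ≤ a ^ p := Real.rpow_le_rpow_of_nonpos ha hab hneg.le
    have hmin : min (a ^ p) (b ^ p) = b ^ p := min_eq_right hord
    have hmax : max (a ^ p) (b ^ p) = a ^ p := max_eq_left hord
    have hinv : p⁻¹ ≤ 0 := inv_nonpos.mpr hneg.le
    constructor
    · calc a = (a ^ p) ^ p⁻¹ := (Real.rpow_rpow_inv ha.le hp).symm
        _ ≤ c ^ p⁻¹ := Real.rpow_le_rpow_of_nonpos hcpos (hmax ▸ h2) hinv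
    · calc c ^ p⁻¹ ≤ (b ^ p) ^ p⁻¹ :=
            Real.rpow_le_rpow_of_nonpos (Real.rpow_pos_of_pos hb p) (hmin ▸ h1) hinv
        _ = b := Real.rpow_rpow_inv hb.le hp
  · have hord : a ^ p ≤ b ^ p := Real.rpow_le_rpow ha.le hab hpos.le
    have hmin : min (a ^ p) (b ^ p) = a ^ p := min_eq_left hord
    have hmax : max (a ^ p) (b ^ p) = b ^ p := max_eq_right hord
    have hinv : 0 ≤ p⁻¹ := inv_nonneg.mpr hpos.le
    constructor
    · calc a = (a ^ p) ^ p⁻¹ := (Real.rpow_rpow_inv ha.le hp).symm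
        _ ≤ c ^ p⁻¹ := Real.rpow_le_rpow (Real.rpow_pos_of_pos ha p).le (hmin ▸ h1) hinv
    · calc c ^ p⁻¹ ≤ (b ^ p) ^ p⁻¹ := Real.rpow_le_rpow hcpos.le (hmax ▸ h2) hinv
        _ = b := Real.rpow_rpow_inv hb.le hp

lemma psym_lower {p a b x : ℝ} (hp : p ≠ 0) (ha : 0 < a) (hab : a < b)
    (f : ℝ → ℝ) (hf : PConvexOn p a b (PSym p a b f)) (hx : x ∈ Set.Icc a b) :
    f (((a ^ p + b ^ p) / 2) ^ (1/p)) ≤ PSym p a b f x := by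
  have hb : 0 < b := lt_trans ha hab
  have hxpos : 0 < x := lt_of_lt_of_le ha hx.1
  obtain ⟨hm1, hm2⟩ := pow_mem_bounds hp ha hx
  have hmm : min (a ^ p) (b ^ p) + max (a ^ p) (b ^ p) = a ^ p + b ^ p :=
    min_add_max _ _
  have hminpos : 0 < min (a ^ p) (b ^ p) :=
    lt_min (Real.rpow_pos_of_pos ha p) (Real.rpow_pos_of_pos hb p)
  set c : ℝ := a ^ p + b ^ p - x ^ p with hc
  have hc1 : min (a ^ p) (b ^ p) ≤ c := by simp only [hc]; linarith
  have hc2 : c ≤ max (a ^ p) (b ^ p) := by simp only [hc]; linarith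
  have hcpos : 0 < c := lt_of_lt_of_le hminpos hc1
  have hy : c ^ (1/p) ∈ Set.Icc a b := rpow_inv_mem_Icc hp ha hab.le hc1 hc2
  have h := hf x hx (c ^ (1/p)) hy (1/2) (by norm_num)
  have hcp : (c ^ (1/p)) ^ p = c := by
    rw [one_div]; exact Real.rpow_inv_rpow hcpos.le hp
  rw [hcp] at h
  have hsum : (1/2 : ℝ) * x ^ p + (1 - 1/2) * c = (a ^ p + b ^ p) / 2 := by
    simp only [hc]; ring
  rw [hsum] at h
  -- PSym at the midpoint equals f at the midpoint
  have hmid : 0 < (a ^ p + b ^ p) / 2 := by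
    have := Real.rpow_pos_of_pos ha p; have := Real.rpow_pos_of_pos hb p; linarith
  have hgm : PSym p a b f (((a ^ p + b ^ p) / 2) ^ (1/p))
      = f (((a ^ p + b ^ p) / 2) ^ (1/p)) := by
    unfold PSym
    rw [show (((a ^ p + b ^ p) / 2) ^ (1/p)) ^ p = (a ^ p + b ^ p) / 2 by
      rw [one_div]; exact Real.rpow_inv_rpow hmid.le hp]
    rw [show a ^ p + b ^ p - (a ^ p + b ^ p) / 2 = (a ^ p + b ^ p) / 2 by ring]
    ring
  -- PSym at the reflected point equals PSym at x
  have hgy : PSym p a b f (c ^ (1/p)) = PSym p a b f x := by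
    unfold PSym
    rw [hcp, show a ^ p + b ^ p - c = x ^ p from by simp only [hc]; ring,
      show (x ^ p) ^ (1/p) = x from by rw [one_div]; exact Real.rpow_rpow_inv hxpos.le hp]
    ring
  rw [hgy] at h
  rw [← hgm]
  linarith

lemma psym_upper {p a b x : ℝ} (hp : p ≠ 0) (ha : 0 < a) (hab : a < b)
    (f : ℝ → ℝ) (hf : PConvexOn p a b (PSym p a b f)) (hx : x ∈ Set.Icc a b) :
    PSym p a b f x ≤ (f a + f b) / 2 := by
  have hb : 0 < b := lt_trans ha hab
  have hxpos : 0 < x := lt_of_lt_of_le ha hx.1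
  obtain ⟨hm1, hm2⟩ := pow_mem_bounds hp ha hx
  -- find t ∈ [0,1] with t * a^p + (1-t) * b^p = x^p
  obtain ⟨t, ht, hxt⟩ : ∃ t ∈ Set.Icc (0:ℝ) 1, t * a ^ p + (1 - t) * b ^ p = x ^ p := by
    rcases lt_or_gt_of_ne hp with hneg | hpos
    · have hord : b ^ p < a ^ p := Real.rpow_lt_rpow_of_neg ha hab hneg
      have hmin : min (a ^ p) (b ^ p) = b ^ p := min_eq_right hord.le
      have hmax : max (a ^ p) (b ^ p) = a ^ p := max_eq_left hord.le
      rw [hmin] at hm1; rw [hmax] at hm2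
      refine ⟨(x ^ p - b ^ p) / (a ^ p - b ^ p), ⟨?_, ?_⟩, ?_⟩
      · exact div_nonneg (by linarith) (by linarith)
      · rw [div_le_one (by linarith)]; linarith
      · have hne : a ^ p - b ^ p ≠ 0 := sub_ne_zero.mpr hord.ne'
        field_simp [hne]
        ring
    · have hord : a ^ p < b ^ p := Real.rpow_lt_rpow ha.le hab hpos
      have hmin : min (a ^ p) (b ^ p) = a ^ p := min_eq_left hord.le
      have hmax : max (a ^ p) (b ^ p) = b ^ p := max_eq_right hord.le
      rw [hmin] at hm1; rw [hmax] at hm2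
      refine ⟨(b ^ p - x ^ p) / (b ^ p - a ^ p), ⟨?_, ?_⟩, ?_⟩
      · exact div_nonneg (by linarith) (by linarith)
      · rw [div_le_one (by linarith)]; linarith
      · have hne : b ^ p - a ^ p ≠ 0 := sub_ne_zero.mpr hord.ne'
        field_simp [hne]
        ring
  have h := hf a ⟨le_refl a, hab.le⟩ b ⟨hab.le, le_refl b⟩ t ht
  rw [hxt, show (x ^ p) ^ (1/p) = x from by
    rw [one_div]; exact Real.rpow_rpow_inv hxpos.le hp] at h
  have hga : PSym p a b f a = (f a + f b) / 2 := by
    unfold PSym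
    rw [show a ^ p + b ^ p - a ^ p = b ^ p by ring,
      show (b ^ p) ^ (1/p) = b from by rw [one_div]; exact Real.rpow_rpow_inv hb.le hp]
  have hgb : PSym p a b f b = (f a + f b) / 2 := by
    unfold PSym
    rw [show a ^ p + b ^ p - b ^ p = a ^ p by ring,
      show (a ^ p) ^ (1/p) = a from by rw [one_div]; exact Real.rpow_rpow_inv ha.le hp]
    ring
  rw [hga, hgb] at h
  calc PSym p a b f x ≤ t * ((f a + f b) / 2) + (1 - t) * ((f a + f b) / 2) := h
    _ = (f a + f b) / 2 := by ring

theorem weighted_psym_bounds (p a b : ℝ) (hp : p ≠ 0) (ha : 0 < a) (hab : a < b)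
    (f w : ℝ → ℝ) (hf : PConvexOn p a b (PSym p a b f))
    (hw : ∀ x ∈ Set.Icc a b, 0 ≤ w x)
    (hw_int : IntervalIntegrable (fun x => w x * x ^ (p - 1)) volume a b)
    (hwf_int : IntervalIntegrable (fun x => w x * PSym p a b f x * x ^ (p - 1)) volume a b) :
    f (((a ^ p + b ^ p) / 2) ^ (1/p)) * ∫ x in a..b, w x * x ^ (p - 1) ≤
        (∫ x in a..b, w x * PSym p a b f x * x ^ (p - 1)) ∧
    (∫ x in a..b, w x * PSym p a b f x * x ^ (p - 1)) ≤
        ((f a + f b) / 2) * ∫ x in a..b, w x * x ^ (p - 1) := by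
  have hnn : ∀ x ∈ Set.Icc a b, 0 ≤ w x * x ^ (p - 1) := fun x hx =>
    mul_nonneg (hw x hx) (Real.rpow_pos_of_pos (lt_of_lt_of_le ha hx.1) (p - 1)).le
  constructor
  · rw [← intervalIntegral.integral_const_mul]
    apply intervalIntegral.integral_mono_on hab.le (hw_int.const_mul _) hwf_int
    intro x hx
    have h1 := psym_lower hp ha hab f hf hx
    calc f (((a ^ p + b ^ p) / 2) ^ (1/p)) * (w x * x ^ (p - 1))
        ≤ PSym p a b f x * (w x * x ^ (p - 1)) :=
          mul_le_mul_of_nonneg_right h1 (hnn x hx)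
      _ = w x * PSym p a b f x * x ^ (p - 1) := by ring
  · rw [← intervalIntegral.integral_const_mul]
    apply intervalIntegral.integral_mono_on hab.le hwf_int (hw_int.const_mul _)
    intro x hx
    have h1 := psym_upper hp ha hab f hf hx
    calc w x * PSym p a b f x * x ^ (p - 1)
        = PSym p a b f x * (w x * x ^ (p - 1)) := by ring
      _ ≤ ((f a + f b) / 2) * (w x * x ^ (p - 1)) :=
          mul_le_mul_of_nonneg_right h1 (hnn x hx)
end
end

section
/- If f : [a,b] ⊆ (0,∞) → ℝ is symmetrized p-convex (p ≠ 0) and w : [a,b] → [0,∞) is integrable and p-symmetric with respect to ((a^p + b^p)/2)^(1/p), i.e. w(x) = w((a^p + b^p - x^p)^(1/p)) for all x ∈ [a,b], then f(((a^p + b^p)/2)^(1/p)) · ∫_a^b w(x)·x^(p-1) dx ≤ ∫_a^b w(x)·f(x)·x^(p-1) dx ≤ ((f(a) + f(b))/2) · ∫_a^b w(x)·x^(p-1) dx. -/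
noncomputable section
open Real Set MeasureTheory intervalIntegral

/-!
The map `x ↦ (a^p + b^p - x^p)^(1/p)` is an involution of `[a,b]` exchanging `a`
and `b`; it preserves the measure `x^(p-1) dx` (which is `d(x^p)/p`) and, by hypothesis, the
weight `w`. Hence integrating `w f` against `x^(p-1) dx` is the same as integrating `w P` with
`P = PSym p a b f`, and it suffices to bound `P` pointwise: p-convexity at `x` and its mirror
image with `t = 1/2` gives `f(M) = P(M) ≤ P(x)` for the p-mean `M`, and writing
`x^p = t a^p + (1-t) b^p` gives `P(x) ≤ t P(a) + (1-t) P(b) = (f a + f b)/2`.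
-/

theorem add_sub_mem_uIcc {α : Type*} [AddCommGroup α] [LinearOrder α] [IsOrderedAddMonoid α]
    {a b u : α} (hu : u ∈ uIcc a b) : a + b - u ∈ uIcc a b := by
  rwa [← mem_preimage (f := fun x ↦ a + b - x), preimage_const_sub_uIcc, add_sub_cancel_left,
    add_sub_cancel_right, uIcc_comm]

section

variable {p a b x : ℝ}

theorem rpow_rpow_one_div (hx : 0 ≤ x) (hp : p ≠ 0) : (x ^ p) ^ (1 / p) = x := by
  rw [one_div, rpow_rpow_inv hx hp]

theorem rpow_one_div_rpow (hx : 0 ≤ x) (hp : p ≠ 0) : (x ^ (1 / p)) ^ p = x := by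
  rw [one_div, rpow_inv_rpow hx hp]

theorem rpow_mem_uIcc_rpow_iff (hp : p ≠ 0) (ha : 0 < a) (hab : a ≤ b) (hx : 0 < x) :
    x ^ p ∈ uIcc (a ^ p) (b ^ p) ↔ x ∈ Icc a b := by
  have hb : 0 < b := ha.trans_le hab
  rcases hp.lt_or_gt with hp | hp
  · have h := strictAntiOn_rpow_Ioi_of_exponent_neg hp
    rw [uIcc_of_ge (h.antitoneOn ha hb hab), mem_Icc, mem_Icc,
      h.le_iff_ge hx ha, h.le_iff_ge hb hx, and_comm]
  · have h := (strictMonoOn_rpow_Ici_of_exponent_pos hp).mono (Ioi_subset_Ici_self (a := 0))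
    rw [uIcc_of_le (h.monotoneOn ha hb hab), mem_Icc, mem_Icc,
      h.le_iff_le ha hx, h.le_iff_le hx hb]

theorem sub_rpow_mem_uIcc (hp : p ≠ 0) (ha : 0 < a) (hab : a ≤ b) (hx : x ∈ Icc a b) :
    a ^ p + b ^ p - x ^ p ∈ uIcc (a ^ p) (b ^ p) :=
  add_sub_mem_uIcc ((rpow_mem_uIcc_rpow_iff hp ha hab (ha.trans_le hx.1)).2 hx)

theorem pos_of_mem_uIcc_rpow (ha : 0 < a) (hb : 0 < b) {u : ℝ} (hu : u ∈ uIcc (a ^ p) (b ^ p)) :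
    0 < u :=
  (lt_min (rpow_pos_of_pos ha p) (rpow_pos_of_pos hb p)).trans_le hu.1

end

/-- The reflection of `[a,b]` in its p-mean `((a^p + b^p)/2)^(1/p)`. -/
def pReflect (p a b x : ℝ) : ℝ := (a ^ p + b ^ p - x ^ p) ^ (1 / p)

theorem PSym_apply (p a b : ℝ) (f : ℝ → ℝ) (x : ℝ) :
    PSym p a b f x = (f x + f (pReflect p a b x)) / 2 := rfl

namespace pReflect

variable {p a b x : ℝ}

theorem rpow_eq (hp : p ≠ 0) (ha : 0 < a) (hab : a ≤ b) (hx : x ∈ Icc a b) :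
    pReflect p a b x ^ p = a ^ p + b ^ p - x ^ p :=
  rpow_one_div_rpow
    (pos_of_mem_uIcc_rpow ha (ha.trans_le hab) (sub_rpow_mem_uIcc hp ha hab hx)).le hp

theorem mapsTo (hp : p ≠ 0) (ha : 0 < a) (hab : a ≤ b) :
    MapsTo (pReflect p a b) (Icc a b) (Icc a b) := fun x hx ↦ by
  have hu := sub_rpow_mem_uIcc hp ha hab hx
  refine (rpow_mem_uIcc_rpow_iff hp ha hab ?_).1 ?_
  · exact rpow_pos_of_pos (pos_of_mem_uIcc_rpow ha (ha.trans_le hab) hu) _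
  · rwa [rpow_eq hp ha hab hx]

theorem involutive (hp : p ≠ 0) (ha : 0 < a) (hab : a ≤ b) (hx : x ∈ Icc a b) :
    pReflect p a b (pReflect p a b x) = x := by
  rw [pReflect, rpow_eq hp ha hab hx, sub_sub_cancel,
    rpow_rpow_one_div (ha.trans_le hx.1).le hp]

theorem bijOn (hp : p ≠ 0) (ha : 0 < a) (hab : a ≤ b) :
    BijOn (pReflect p a b) (Icc a b) (Icc a b) :=
  InvOn.bijOn ⟨fun _ ↦ involutive hp ha hab, fun _ ↦ involutive hp ha hab⟩
    (mapsTo hp ha hab) (mapsTo hp ha hab)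

theorem left (hp : p ≠ 0) (hb : 0 ≤ b) : pReflect p a b a = b := by
  rw [pReflect, add_sub_cancel_left, rpow_rpow_one_div hb hp]

theorem right (hp : p ≠ 0) (ha : 0 ≤ a) : pReflect p a b b = a := by
  rw [pReflect, add_sub_cancel_right, rpow_rpow_one_div ha hp]

theorem pMean (hp : p ≠ 0) (ha : 0 < a) (hb : 0 < b) :
    pReflect p a b (((a ^ p + b ^ p) / 2) ^ (1 / p)) = ((a ^ p + b ^ p) / 2) ^ (1 / p) := by
  have hM : 0 ≤ (a ^ p + b ^ p) / 2 := by positivity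
  rw [pReflect, rpow_one_div_rpow hM hp, sub_half]

theorem hasDerivAt (hp : p ≠ 0) (ha : 0 < a) (hab : a ≤ b) (hx : x ∈ Icc a b) :
    HasDerivAt (pReflect p a b) (-(x ^ (p - 1) / pReflect p a b x ^ (p - 1))) x := by
  have hc := pos_of_mem_uIcc_rpow ha (ha.trans_le hab) (sub_rpow_mem_uIcc hp ha hab hx)
  have hinner := (hasDerivAt_const x (a ^ p + b ^ p)).sub
    (hasDerivAt_rpow_const (p := p) (Or.inl (ha.trans_le hx.1).ne'))
  refine ((hasDerivAt_rpow_const (p := 1 / p) (Or.inl hc.ne')).comp x hinner).congr_deriv ?_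
  rw [pReflect, ← rpow_mul hc.le, show 1 / p - 1 = -(1 / p * (p - 1)) by field_simp; ring,
    rpow_neg hc.le, zero_sub]
  field_simp

theorem abs_deriv_smul (hp : p ≠ 0) (ha : 0 < a) (hab : a ≤ b) (hx : x ∈ Icc a b)
    (c : ℝ) :
    |-(x ^ (p - 1) / pReflect p a b x ^ (p - 1))| • (c * pReflect p a b x ^ (p - 1)) =
      c * x ^ (p - 1) := by
  have hx0 : 0 < x := ha.trans_le hx.1
  have : 0 < pReflect p a b x ^ (p - 1) :=
    rpow_pos_of_pos (ha.trans_le (mapsTo hp ha hab hx).1) _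
  rw [abs_neg, abs_of_nonneg (by positivity), smul_eq_mul]
  field_simp

end pReflect

section

variable {p a b : ℝ}

theorem integrableOn_pReflect_mul_rpow_iff (hp : p ≠ 0) (ha : 0 < a) (hab : a ≤ b)
    {h : ℝ → ℝ} :
    IntegrableOn (fun x ↦ h (pReflect p a b x) * x ^ (p - 1)) (Icc a b) ↔
      IntegrableOn (fun x ↦ h x * x ^ (p - 1)) (Icc a b) := by
  have hφ := pReflect.bijOn hp ha hab
  have hcov := integrableOn_image_iff_integrableOn_abs_deriv_smul measurableSet_Icc
    (fun x hx ↦ (pReflect.hasDerivAt hp ha hab hx).hasDerivWithinAt) hφ.injOn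
    fun u ↦ h u * u ^ (p - 1)
  rw [hφ.image_eq] at hcov
  rw [hcov]
  exact integrableOn_congr_fun (fun x hx ↦ (pReflect.abs_deriv_smul hp ha hab hx _).symm)
    measurableSet_Icc

theorem setIntegral_pReflect_mul_rpow (hp : p ≠ 0) (ha : 0 < a) (hab : a ≤ b)
    (h : ℝ → ℝ) :
    ∫ x in Icc a b, h (pReflect p a b x) * x ^ (p - 1) = ∫ x in Icc a b, h x * x ^ (p - 1) := by
  have hφ := pReflect.bijOn hp ha hab
  calc ∫ x in Icc a b, h (pReflect p a b x) * x ^ (p - 1)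
      = ∫ x in Icc a b, |-(x ^ (p - 1) / pReflect p a b x ^ (p - 1))| •
          (h (pReflect p a b x) * pReflect p a b x ^ (p - 1)) :=
        setIntegral_congr_fun measurableSet_Icc fun x hx ↦
          (pReflect.abs_deriv_smul hp ha hab hx _).symm
    _ = ∫ x in pReflect p a b '' Icc a b, h x * x ^ (p - 1) :=
        (integral_image_eq_integral_abs_deriv_smul measurableSet_Icc
          (fun x hx ↦ (pReflect.hasDerivAt hp ha hab hx).hasDerivWithinAt) hφ.injOn
          fun u ↦ h u * u ^ (p - 1)).symm
    _ = ∫ x in Icc a b, h x * x ^ (p - 1) := by rw [hφ.image_eq]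

end

section

variable {p a b x : ℝ} {f : ℝ → ℝ}

theorem PConvexOn.le_max {g : ℝ → ℝ} (hg : PConvexOn p a b g) (hp : p ≠ 0) (ha : 0 < a)
    (hab : a ≤ b) (hx : x ∈ Icc a b) : g x ≤ max (g a) (g b) := by
  have hx0 : 0 < x := ha.trans_le hx.1
  obtain ⟨s, t, hs, ht, hst, hxp⟩ :=
    segment_eq_uIcc (a ^ p) (b ^ p) ▸ (rpow_mem_uIcc_rpow_iff hp ha hab hx0).2 hx
  have hconv := hg a (left_mem_Icc.2 hab) b (right_mem_Icc.2 hab) s ⟨hs, by linarith⟩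
  rw [show 1 - s = t by linarith, ← smul_eq_mul s, ← smul_eq_mul t (b ^ p), hxp,
    rpow_rpow_one_div hx0.le hp] at hconv
  exact hconv.trans (Convex.combo_le_max (g a) (g b) hs ht hst)

theorem PSym_pReflect (hp : p ≠ 0) (ha : 0 < a) (hab : a ≤ b) (hx : x ∈ Icc a b) :
    PSym p a b f (pReflect p a b x) = PSym p a b f x := by
  rw [PSym_apply, PSym_apply, pReflect.involutive hp ha hab hx, add_comm]

theorem PSym_left (hp : p ≠ 0) (hb : 0 ≤ b) : PSym p a b f a = (f a + f b) / 2 := by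
  rw [PSym_apply, pReflect.left hp hb]

theorem PSym_right (hp : p ≠ 0) (ha : 0 ≤ a) : PSym p a b f b = (f a + f b) / 2 := by
  rw [PSym_apply, pReflect.right hp ha, add_comm]

theorem PSym_pMean (hp : p ≠ 0) (ha : 0 < a) (hb : 0 < b) :
    PSym p a b f (((a ^ p + b ^ p) / 2) ^ (1 / p)) = f (((a ^ p + b ^ p) / 2) ^ (1 / p)) := by
  rw [PSym_apply, pReflect.pMean hp ha hb, add_self_div_two]

theorem apply_pMean_le_PSym (hf : PConvexOn p a b (PSym p a b f)) (hp : p ≠ 0) (ha : 0 < a)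
    (hab : a ≤ b) (hx : x ∈ Icc a b) :
    f (((a ^ p + b ^ p) / 2) ^ (1 / p)) ≤ PSym p a b f x := by
  have h := hf x hx _ (pReflect.mapsTo hp ha hab hx) (1 / 2) ⟨by norm_num, by norm_num⟩
  rw [pReflect.rpow_eq hp ha hab hx, PSym_pReflect hp ha hab hx,
    show 1 / 2 * x ^ p + (1 - 1 / 2) * (a ^ p + b ^ p - x ^ p) = (a ^ p + b ^ p) / 2 by ring,
    PSym_pMean hp ha (ha.trans_le hab)] at h
  linarith

theorem PSym_le_of_pConvexOn (hf : PConvexOn p a b (PSym p a b f)) (hp : p ≠ 0) (ha : 0 < a)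
    (hab : a ≤ b) (hx : x ∈ Icc a b) : PSym p a b f x ≤ (f a + f b) / 2 := by
  simpa only [PSym_left hp (ha.le.trans hab), PSym_right hp ha.le, max_self] using
    hf.le_max hp ha hab hx

end

section

variable {p a b : ℝ} {f w : ℝ → ℝ}

theorem mul_PSym_mul_rpow_eqOn (hsym : ∀ x ∈ Icc a b, w x = w (pReflect p a b x)) :
    EqOn (fun x ↦ w x * PSym p a b f x * x ^ (p - 1))
      (fun x ↦ (w x * f x * x ^ (p - 1) +
        w (pReflect p a b x) * f (pReflect p a b x) * x ^ (p - 1)) / 2) (Icc a b) :=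
  fun x hx ↦ by
    simp only [PSym_apply, ← hsym x hx]
    ring

theorem integrableOn_mul_PSym_mul_rpow (hp : p ≠ 0) (ha : 0 < a) (hab : a ≤ b)
    (hsym : ∀ x ∈ Icc a b, w x = w (pReflect p a b x))
    (hwf : IntegrableOn (fun x ↦ w x * f x * x ^ (p - 1)) (Icc a b)) :
    IntegrableOn (fun x ↦ w x * PSym p a b f x * x ^ (p - 1)) (Icc a b) :=
  (integrableOn_congr_fun (mul_PSym_mul_rpow_eqOn hsym) measurableSet_Icc).2
    ((hwf.add ((integrableOn_pReflect_mul_rpow_iff hp ha hab (h := fun u ↦ w u * f u)).2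
      hwf)).div_const 2)

theorem setIntegral_mul_PSym_mul_rpow (hp : p ≠ 0) (ha : 0 < a) (hab : a ≤ b)
    (hsym : ∀ x ∈ Icc a b, w x = w (pReflect p a b x))
    (hwf : IntegrableOn (fun x ↦ w x * f x * x ^ (p - 1)) (Icc a b)) :
    ∫ x in Icc a b, w x * PSym p a b f x * x ^ (p - 1) =
      ∫ x in Icc a b, w x * f x * x ^ (p - 1) := by
  rw [setIntegral_congr_fun measurableSet_Icc (mul_PSym_mul_rpow_eqOn hsym),
    MeasureTheory.integral_div, integral_add hwf
      ((integrableOn_pReflect_mul_rpow_iff hp ha hab (h := fun u ↦ w u * f u)).2 hwf),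
    setIntegral_pReflect_mul_rpow hp ha hab fun u ↦ w u * f u, add_self_div_two]

end

theorem fejer_symmetrized_pconvex (p a b : ℝ) (hp : p ≠ 0) (ha : 0 < a) (hab : a < b)
    (f w : ℝ → ℝ) (hf : PConvexOn p a b (PSym p a b f))
    (hw : ∀ x ∈ Set.Icc a b, 0 ≤ w x)
    (hsym : ∀ x ∈ Set.Icc a b, w x = w ((a ^ p + b ^ p - x ^ p) ^ (1/p)))
    (hw_int : IntervalIntegrable (fun x => w x * x ^ (p - 1)) volume a b)
    (hwf_int : IntervalIntegrable (fun x => w x * f x * x ^ (p - 1)) volume a b) :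
    f (((a ^ p + b ^ p) / 2) ^ (1/p)) * ∫ x in a..b, w x * x ^ (p - 1) ≤
        (∫ x in a..b, w x * f x * x ^ (p - 1)) ∧
    (∫ x in a..b, w x * f x * x ^ (p - 1)) ≤
        ((f a + f b) / 2) * ∫ x in a..b, w x * x ^ (p - 1) := by
  rw [intervalIntegrable_iff_integrableOn_Icc_of_le hab.le] at hw_int hwf_int
  simp only [integral_of_le hab.le, ← integral_Icc_eq_integral_Ioc,
    ← MeasureTheory.integral_const_mul,
    ← setIntegral_mul_PSym_mul_rpow hp ha hab.le hsym hwf_int]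
  have hwPf := integrableOn_mul_PSym_mul_rpow hp ha hab.le hsym hwf_int
  have hweight : ∀ x ∈ Icc a b, 0 ≤ w x * x ^ (p - 1) :=
    fun x hx ↦ mul_nonneg (hw x hx) (rpow_nonneg (ha.le.trans hx.1) _)
  constructor
  · refine setIntegral_mono_on (hw_int.const_mul _) hwPf measurableSet_Icc fun x hx ↦ ?_
    linarith [mul_le_mul_of_nonneg_right (apply_pMean_le_PSym hf hp ha hab.le hx) (hweight x hx)]
  · refine setIntegral_mono_on hwPf (hw_int.const_mul _) measurableSet_Icc fun x hx ↦ ?_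
    linarith [mul_le_mul_of_nonneg_right (PSym_le_of_pConvexOn hf hp ha hab.le hx) (hweight x hx)]
end
end
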